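/- arXiv:1912.08186 — 2 statements merged into one kernel-verified Lean document; each statement's English description precedes it below -/
import Mathlib

section
/- (Consequence of Baranyai's theorem) Let n ≥ k ≥ 1 and let a_1,...,a_t be positive integers with each a_i ≤ n/k and a_1 + ... + a_t = C(n,k). Then the vertex set of K(n,k) can be partitioned into sets A_1,...,A_t such that each A_i is a clique in K(n,k) with |A_i| = a_i. -/
open Finset

/-- The Kneser graph `K(n,k)`: vertices are the `k`-subsets of `[n]`,
two vertices are adjacent iff they are disjoint. -/
def kneser (n k : ℕ) : SimpleGraph {s : Finset (Fin n) // s.card = k} where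
  Adj x y := x ≠ y ∧ Disjoint x.1 y.1
  symm := ⟨fun _ _ ⟨h1, h2⟩ => ⟨h1.symm, h2.symm⟩⟩
  loopless := ⟨fun _ ⟨h, _⟩ => h rfl⟩

structure BInv (n k t : ℕ) (a : Fin t → ℕ) (m : ℕ)
    (f : Fin t → Finset (Fin n) → ℕ) : Prop where
  supp : ∀ i s, f i s ≠ 0 → ∀ y ∈ s, (y : Fin n).val < m
  cardle : ∀ i s, f i s ≠ 0 → s.card ≤ k
  mult : ∀ i s, s ≠ ∅ → f i s ≤ 1
  disj : ∀ i s u, f i s ≠ 0 → f i u ≠ 0 → s ≠ u → Disjoint s u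
  total : ∀ i, ∑ s, f i s = a i
  count : ∀ s : Finset (Fin n), (∀ y ∈ s, (y : Fin n).val < m) → s.card ≤ k →
      ∑ i, f i s = (n - m).choose (k - s.card)
  slack : ∀ i, ∑ s, f i s * (k - s.card) ≤ n - m

theorem sum_update_mul {α : Type*} [Fintype α] [DecidableEq α]
    (f : α → ℕ) (p : α) (b : ℕ) (w : α → ℕ) (S : Finset α) (hp : p ∈ S) :
    ∑ u ∈ S, Function.update f p b u * w u = b * w p + ∑ u ∈ S.erase p, f u * w u := by
  have h : (fun u => Function.update f p b u * w u)
      = Function.update (fun u => f u * w u) p (b * w p) := by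
    funext u
    by_cases hu : u = p
    · subst hu; simp
    · simp [Function.update_of_ne hu]
  rw [h, Finset.erase_eq]
  exact Finset.sum_update_of_mem hp (fun u => f u * w u) (b * w p)

theorem BInv_base (n k t : ℕ) (a : Fin t → ℕ) (hk : 1 ≤ k)
    (hank : ∀ i, a i ≤ n / k) (hsum : ∑ i, a i = n.choose k) :
    BInv n k t a 0 (fun i s => if s = (∅ : Finset (Fin n)) then a i else 0) := by
  classical
  have hsingle : ∀ (g : Finset (Fin n) → ℕ) (b : ℕ),
      (∑ s : Finset (Fin n), if s = ∅ then b else 0) = b := by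
    intro g b
    rw [Finset.sum_ite_eq' Finset.univ (∅ : Finset (Fin n)) (fun _ => b)]
    simp
  constructor
  · intro i s hs y hy
    by_cases h : s = ∅
    · subst h; simp at hy
    · simp [h] at hs
  · intro i s hs
    by_cases h : s = ∅
    · subst h; simp
    · simp [h] at hs
  · intro i s hs
    simp [hs]
  · intro i s u hs hu hsu
    by_cases h : s = ∅ <;> by_cases h' : u = ∅ <;> simp [h, h'] at hs hu ⊢
  · intro i
    exact hsingle (fun _ => 0) (a i)
  · intro s hsupp hcard
    by_cases h : s = ∅
    · subst h
      simp only [if_pos rfl]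
      simpa using hsum
    · exfalso
      obtain ⟨y, hy⟩ := Finset.nonempty_iff_ne_empty.mpr h
      exact absurd (hsupp y hy) (Nat.not_lt_zero _)
  · intro i
    have : (∑ s : Finset (Fin n), (if s = ∅ then a i else 0) * (k - s.card))
        = a i * k := by
      rw [Finset.sum_eq_single (∅ : Finset (Fin n))]
      · simp
      · intro b _ hb; simp [hb]
      · simp
    rw [this, Nat.sub_zero]
    exact (Nat.le_div_iff_mul_le hk).mp (hank i)

theorem sum_eq_one_existsUnique {t : ℕ} (g : Fin t → ℕ) (h : ∑ i, g i = 1) :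
    ∃! i, g i ≠ 0 := by
  classical
  have h1 : ∃ i, g i ≠ 0 := by
    by_contra hc
    push_neg at hc
    simp only [hc, Finset.sum_const_zero] at h
    exact absurd h (by norm_num)
  obtain ⟨i, hi⟩ := h1
  refine ⟨i, hi, fun j hj => ?_⟩
  by_contra hne
  have hsub : ({j, i} : Finset (Fin t)) ⊆ Finset.univ := Finset.subset_univ _
  have hpair : ∑ x ∈ ({j, i} : Finset (Fin t)), g x = g j + g i :=
    Finset.sum_pair hne
  have hle : ∑ x ∈ ({j, i} : Finset (Fin t)), g x ≤ ∑ i, g i :=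
    Finset.sum_le_sum_of_subset hsub
  have := Nat.one_le_iff_ne_zero.mpr hi
  have := Nat.one_le_iff_ne_zero.mpr hj
  omega
theorem BInv_step (n k t : ℕ) (a : Fin t → ℕ) (hk : 1 ≤ k) (m : ℕ) (hm : m < n)
    (f : Fin t → Finset (Fin n) → ℕ) (hf : BInv n k t a m f) :
    ∃ f', BInv n k t a (m + 1) f' := by
  classical
  set x : Fin n := ⟨m, hm⟩ with hx
  set d : Finset (Fin n) → ℕ := fun s => (n - m - 1).choose (k - s.card - 1) with hd
  set ρ : Fin t → ℕ := fun i => ∑ s, f i s * (k - s.card) with hρ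
  set slots : Fin t → Finset (Finset (Fin n)) :=
    fun i => Finset.univ.filter (fun s => f i s ≠ 0 ∧ s.card < k) with hslots
  set allTypes : Finset (Finset (Fin n)) :=
    Finset.univ.filter (fun s => (∀ y ∈ s, (y : Fin n).val < m) ∧ s.card < k) with hallTypes
  -- identity N s * (k - c) = (n - m) * d s for s ∈ allTypes
  have hNd : ∀ s ∈ allTypes, (∑ i, f i s) * (k - s.card) = (n - m) * d s := by
    intro s hs
    rw [hallTypes, Finset.mem_filter] at hs
    obtain ⟨-, hsupp, hsc⟩ := hs
    rw [hf.count s hsupp (le_of_lt hsc)]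
    have h1 : n - m = (n - m - 1) + 1 := by omega
    have h2 : k - s.card = (k - s.card - 1) + 1 := by omega
    have h3 := Nat.add_one_mul_choose_eq (n - m - 1) (k - s.card - 1)
    rw [h1, h2, ← h3, hd]
  -- slots i ⊆ allTypes
  have hslots_sub : ∀ i, slots i ⊆ allTypes := by
    intro i s hs
    rw [hslots, Finset.mem_filter] at hs
    rw [hallTypes, Finset.mem_filter]
    exact ⟨Finset.mem_univ _, hf.supp i s hs.2.1, hs.2.2⟩
  -- zero terms outside allTypes
  have hzero : ∀ s ∈ (Finset.univ : Finset (Finset (Fin n))), s ∉ allTypes →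
      (∑ i, f i s) * (k - s.card) = 0 := by
    intro s _ hs
    rw [hallTypes, Finset.mem_filter] at hs
    by_cases hsc : s.card < k
    · have hsup : ¬ (∀ y ∈ s, (y : Fin n).val < m) := by
        intro hsup; exact hs ⟨Finset.mem_univ s, hsup, hsc⟩
      have hz : ∀ i, f i s = 0 := by
        intro i
        by_contra hc
        exact hsup (hf.supp i s hc)
      simp [hz]
    · have h0 : k - s.card = 0 := by omega
      rw [h0, Nat.mul_zero]
  have hmul : ∀ s : Finset (Fin n), (∑ i, f i s * (k - s.card))
      = (∑ i, f i s) * (k - s.card) := by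
    intro s; rw [Finset.sum_mul]
  -- global identity (A)
  have hA : ∑ i, ρ i = (n - m) * ∑ s ∈ allTypes, d s := by
    rw [hρ]
    rw [Finset.sum_comm]
    simp only [hmul]
    rw [← Finset.sum_subset (Finset.subset_univ allTypes) hzero, Finset.mul_sum]
    exact Finset.sum_congr rfl hNd
  -- per-subset inequality (B)
  have hB : ∀ A : Finset (Fin t), ∑ i ∈ A, ρ i
      ≤ (n - m) * ∑ s ∈ A.biUnion slots, d s := by
    intro A
    have h1 : ∑ i ∈ A, ρ i = ∑ s : Finset (Fin n), (∑ i ∈ A, f i s) * (k - s.card) := by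
      rw [hρ, Finset.sum_comm]
      exact Finset.sum_congr rfl fun s _ => (Finset.sum_mul _ _ _).symm
    rw [h1]
    rw [← Finset.sum_subset (Finset.subset_univ (A.biUnion slots))]
    · rw [Finset.mul_sum]
      refine Finset.sum_le_sum fun s hs => ?_
      obtain ⟨i0, hi0A, hi0⟩ := Finset.mem_biUnion.mp hs
      have hsall : s ∈ allTypes := hslots_sub i0 hi0
      rw [← hNd s hsall]
      exact Nat.mul_le_mul_right _ (Finset.sum_le_sum_of_subset (Finset.subset_univ A))
    · intro s _ hs
      by_cases hsc : s.card < k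
      · have hz : ∀ i ∈ A, f i s = 0 := by
          intro i hiA
          by_contra hc
          exact hs (Finset.mem_biUnion.mpr ⟨i, hiA,
            by rw [hslots]; exact Finset.mem_filter.mpr ⟨Finset.mem_univ _, hc, hsc⟩⟩)
        rw [Finset.sum_congr rfl hz]
        simp
      · have h0 : k - s.card = 0 := by omega
        rw [h0, Nat.mul_zero]
  -- slack as ρ bound
  have hρle : ∀ i, ρ i ≤ n - m := fun i => hf.slack i
  have hnm : 1 ≤ n - m := by omega
  -- Sd ≤ t
  have hSdt : ∑ s ∈ allTypes, d s ≤ t := by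
    have h1 : (n - m) * ∑ s ∈ allTypes, d s ≤ (n - m) * t := by
      rw [← hA]
      calc ∑ i, ρ i ≤ ∑ _i : Fin t, (n - m) := Finset.sum_le_sum fun i _ => hρle i
        _ = t * (n - m) := by simp [Finset.sum_const, Finset.card_univ, Nat.mul_comm]
        _ = (n - m) * t := Nat.mul_comm _ _
    exact Nat.le_of_mul_le_mul_left h1 (by omega)
  -- Hall setup
  set Sd : ℕ := ∑ s ∈ allTypes, d s with hSd
  set tok : Finset (Fin n) → Finset (Option (Finset (Fin n)) × ℕ) :=
    fun s => {(some s : Option (Finset (Fin n)))} ×ˢ Finset.range (d s) with htok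
  set dum : Finset (Option (Finset (Fin n)) × ℕ) :=
    {(none : Option (Finset (Fin n)))} ×ˢ Finset.range (t - Sd) with hdum
  set tight : Fin t → Prop := fun i => n - m ≤ ρ i with htight
  set r : Fin t → Finset (Option (Finset (Fin n)) × ℕ) :=
    fun i => (slots i).biUnion tok ∪ (if tight i then ∅ else dum) with hr
  set allowed : Finset (Option (Finset (Fin n)) × ℕ) :=
    allTypes.biUnion tok ∪ dum with hallowed
  have htok_card : ∀ s, (tok s).card = d s := by
    intro s
    rw [htok]
    simp
  have htok_pdisj : ∀ S : Finset (Finset (Fin n)),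
      (S : Set (Finset (Fin n))).PairwiseDisjoint tok := by
    intro S s _ u _ hsu
    rw [Function.onFun, Finset.disjoint_left]
    rintro ⟨o, j⟩ hs hu
    rw [htok] at hs hu
    simp only [Finset.mem_product, Finset.mem_singleton] at hs hu
    exact hsu (by rw [← Option.some.injEq]; rw [← hs.1, hu.1])
  have hbiU_card : ∀ S : Finset (Finset (Fin n)),
      (S.biUnion tok).card = ∑ s ∈ S, d s := by
    intro S
    rw [Finset.card_biUnion (fun s hs u hu hsu => htok_pdisj S hs hu hsu)]
    exact Finset.sum_congr rfl fun s _ => htok_card s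
  have hdum_card : dum.card = t - Sd := by rw [hdum]; simp
  have hdum_disj : ∀ S : Finset (Finset (Fin n)), Disjoint (S.biUnion tok) dum := by
    intro S
    rw [Finset.disjoint_left]
    rintro ⟨o, j⟩ hs hdu
    rw [Finset.mem_biUnion] at hs
    obtain ⟨u, _, hu⟩ := hs
    rw [htok] at hu
    rw [hdum] at hdu
    simp only [Finset.mem_product, Finset.mem_singleton] at hu hdu
    rw [hdu.1] at hu
    exact absurd hu.1 (by simp)
  have hallowed_card : allowed.card = t := by
    rw [hallowed, Finset.card_union_of_disjoint (hdum_disj _), hbiU_card, hdum_card]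
    omega
  -- Hall condition
  have hall : ∀ A : Finset (Fin t), A.card ≤ (A.biUnion r).card := by
    intro A
    have hsubtok : (A.biUnion slots).biUnion tok ⊆ A.biUnion r := by
      intro b hb
      rw [Finset.mem_biUnion] at hb
      obtain ⟨s, hsS, hbs⟩ := hb
      rw [Finset.mem_biUnion] at hsS
      obtain ⟨i, hiA, his⟩ := hsS
      refine Finset.mem_biUnion.mpr ⟨i, hiA, ?_⟩
      rw [hr]
      exact Finset.mem_union_left _ (Finset.mem_biUnion.mpr ⟨s, his, hbs⟩)
    set P : ℕ := ∑ s ∈ A.biUnion slots, d s with hP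
    by_cases hT : ∀ i ∈ A, tight i
    · -- all tight
      have h1 : ∑ i ∈ A, ρ i = A.card * (n - m) := by
        rw [Finset.sum_congr rfl (fun i hi => Nat.le_antisymm (hρle i) (hT i hi))]
        rw [Finset.sum_const, smul_eq_mul]
      have h2 : A.card * (n - m) ≤ (n - m) * P := h1 ▸ hB A
      have h3 : A.card ≤ P := by
        rw [Nat.mul_comm] at h2
        exact Nat.le_of_mul_le_mul_left h2 (by omega)
      calc A.card ≤ P := h3
        _ = ((A.biUnion slots).biUnion tok).card := (hbiU_card _).symm
        _ ≤ (A.biUnion r).card := Finset.card_le_card hsubtok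
    · push_neg at hT
      obtain ⟨i0, hi0A, hi0⟩ := hT
      have hdsub : dum ⊆ A.biUnion r := by
        intro b hb
        refine Finset.mem_biUnion.mpr ⟨i0, hi0A, ?_⟩
        rw [hr]
        refine Finset.mem_union_right _ ?_
        rw [if_neg hi0]
        exact hb
      have hsub2 : (A.biUnion slots).biUnion tok ∪ dum ⊆ A.biUnion r :=
        Finset.union_subset hsubtok hdsub
      have hcard2 : ((A.biUnion slots).biUnion tok ∪ dum).card = P + (t - Sd) := by
        rw [Finset.card_union_of_disjoint (hdum_disj _), hbiU_card, hdum_card]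
      set Q : ℕ := ∑ i, ((n - m) - ρ i) with hQ
      have hQ1 : (n - m) * Sd + Q = t * (n - m) := by
        rw [← hA, hQ, ← Finset.sum_add_distrib]
        rw [Finset.sum_congr rfl (fun i (_ : i ∈ Finset.univ) =>
          Nat.add_sub_cancel' (hρle i))]
        rw [Finset.sum_const, Finset.card_univ, Fintype.card_fin, smul_eq_mul]
      have hQ2 : (n - m) * (t - Sd) = Q := by
        have h4 : (n - m) * (t - Sd) + (n - m) * Sd = t * (n - m) := by
          rw [← Nat.mul_add, Nat.sub_add_cancel hSdt, Nat.mul_comm]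
        have h5 : Q + (n - m) * Sd = t * (n - m) := by
          rw [Nat.add_comm]; exact hQ1
        exact Nat.add_right_cancel (h4.trans h5.symm)
      have h2 : A.card * (n - m) ≤ (n - m) * P + Q := by
        have e1 : A.card * (n - m) = ∑ i ∈ A, ((n - m) : ℕ) := by
          rw [Finset.sum_const, smul_eq_mul, Nat.mul_comm]
        have e2 : ∑ i ∈ A, ((n - m) : ℕ) = ∑ i ∈ A, (ρ i + ((n - m) - ρ i)) :=
          Finset.sum_congr rfl (fun i _ => (Nat.add_sub_cancel' (hρle i)).symm)
        have e3 : ∑ i ∈ A, ((n - m) - ρ i) ≤ Q :=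
          Finset.sum_le_sum_of_subset (Finset.subset_univ A)
        rw [e1, e2, Finset.sum_add_distrib]
        exact Nat.add_le_add (hB A) e3
      have h3 : A.card ≤ P + (t - Sd) := by
        have h6 : A.card * (n - m) ≤ (P + (t - Sd)) * (n - m) := by
          rw [Nat.add_mul]
          calc A.card * (n - m) ≤ (n - m) * P + Q := h2
            _ = P * (n - m) + (n - m) * (t - Sd) := by rw [hQ2, Nat.mul_comm]
            _ = P * (n - m) + (t - Sd) * (n - m) := by rw [Nat.mul_comm (n-m)]
        exact Nat.le_of_mul_le_mul_right h6 (by omega)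
      calc A.card ≤ P + (t - Sd) := h3
        _ = ((A.biUnion slots).biUnion tok ∪ dum).card := hcard2.symm
        _ ≤ (A.biUnion r).card := Finset.card_le_card hsub2
  -- apply Hall's theorem
  obtain ⟨F, Finj, hFr⟩ := (Finset.all_card_le_biUnion_card_iff_exists_injective r).mp hall
  have hr_sub : ∀ i, r i ⊆ allowed := by
    intro i b hb
    rw [hr] at hb
    rw [hallowed]
    rcases Finset.mem_union.mp hb with hb | hb
    · refine Finset.mem_union_left _ ?_
      rw [Finset.mem_biUnion] at hb ⊢
      obtain ⟨s, hs, hbs⟩ := hb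
      exact ⟨s, hslots_sub i hs, hbs⟩
    · by_cases ht : tight i
      · rw [if_pos ht] at hb
        exact absurd hb (Finset.notMem_empty b)
      · rw [if_neg ht] at hb
        exact Finset.mem_union_right _ hb
  have himage : Finset.image F Finset.univ = allowed := by
    refine Finset.eq_of_subset_of_card_le ?_ ?_
    · intro b hb
      rw [Finset.mem_image] at hb
      obtain ⟨i, _, hib⟩ := hb
      exact hib ▸ hr_sub i (hFr i)
    · rw [hallowed_card, Finset.card_image_of_injective _ Finj, Finset.card_univ,
        Fintype.card_fin]
  set g : Fin t → Option (Finset (Fin n)) := fun i => (F i).1 with hg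
  -- G1
  have hG1 : ∀ i s, g i = some s → s ∈ slots i := by
    intro i s hgs
    have := hFr i
    rw [hr] at this
    rcases Finset.mem_union.mp this with hb | hb
    · rw [Finset.mem_biUnion] at hb
      obtain ⟨s', hs', hbs⟩ := hb
      rw [htok] at hbs
      simp only [Finset.mem_product, Finset.mem_singleton] at hbs
      have : s' = s := by
        have h1 : (some s' : Option (Finset (Fin n))) = some s := by
          rw [← hbs.1]; exact hgs
        exact Option.some.inj h1
      exact this ▸ hs'
    · by_cases ht : tight i
      · rw [if_pos ht] at hb
        exact absurd hb (Finset.notMem_empty _)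
      · rw [if_neg ht, hdum] at hb
        simp only [Finset.mem_product, Finset.mem_singleton] at hb
        have h1 : (none : Option (Finset (Fin n))) = some s := by
          rw [← hb.1]; exact hgs
        exact absurd h1 (by simp)
  -- G2
  have hG2 : ∀ i, tight i → ∃ s, g i = some s := by
    intro i ht
    have := hFr i
    simp only [hr, if_pos ht, Finset.union_empty, Finset.mem_biUnion] at this
    obtain ⟨s, hs, hbs⟩ := this
    rw [htok] at hbs
    simp only [Finset.mem_product, Finset.mem_singleton] at hbs
    exact ⟨s, hbs.1⟩
  -- G3
  have hG3 : ∀ s ∈ allTypes, (Finset.univ.filter (fun i => g i = some s)).card = d s := by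
    intro s hs
    have hflt : Finset.univ.filter (fun i => g i = some s)
        = Finset.univ.filter (fun i => (fun b : Option (Finset (Fin n)) × ℕ =>
            b.1 = some s) (F i)) := rfl
    have h1 : (Finset.univ.filter (fun i => g i = some s)).card
        = ((Finset.univ.filter (fun i => g i = some s)).image F).card :=
      (Finset.card_image_of_injective _ Finj).symm
    have h2 : (Finset.univ.filter (fun i => g i = some s)).image F
        = allowed.filter (fun b => b.1 = some s) := by
      ext b
      simp only [Finset.mem_image, Finset.mem_filter, Finset.mem_univ, true_and]
      constructor
      · rintro ⟨i, hgi, rfl⟩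
        exact ⟨himage ▸ Finset.mem_image_of_mem F (Finset.mem_univ i), hgi⟩
      · rintro ⟨hb, hb1⟩
        have hbim : b ∈ Finset.image F Finset.univ := himage ▸ hb
        rw [Finset.mem_image] at hbim
        obtain ⟨i, _, rfl⟩ := hbim
        exact ⟨i, hb1, rfl⟩
    have h3 : allowed.filter (fun b : Option (Finset (Fin n)) × ℕ => b.1 = some s)
        = tok s := by
      ext ⟨o, j⟩
      simp only [Finset.mem_filter, hallowed, Finset.mem_union, Finset.mem_biUnion,
        htok, Finset.mem_product, Finset.mem_singleton, hdum]
      constructor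
      · rintro ⟨hmem, ho⟩
        refine ⟨ho, ?_⟩
        rcases hmem with ⟨s', _, ho', hj⟩ | ⟨ho', _⟩
        · have : s' = s := Option.some.inj (ho' ▸ ho : some s' = some s)
          exact this ▸ hj
        · rw [ho'] at ho
          exact absurd ho (by simp)
      · rintro ⟨ho, hj⟩
        exact ⟨Or.inl ⟨s, hs, ho, hj⟩, ho⟩
    rw [h1, h2, h3, htok_card]
  -- facts about promoted classes
  have hxval : (x : Fin n).val = m := rfl
  have hfacts : ∀ i s, g i = some s →
      f i s ≠ 0 ∧ s.card < k ∧ (∀ y ∈ s, (y : Fin n).val < m) ∧ x ∉ s := by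
    intro i s hgs
    have h1 := hG1 i s hgs
    simp only [hslots, Finset.mem_filter] at h1
    have h2 := hf.supp i s h1.2.1
    refine ⟨h1.2.1, h1.2.2, h2, fun hxin => ?_⟩
    have := h2 x hxin
    omega
  -- the new family
  set f' : Fin t → Finset (Fin n) → ℕ := fun i =>
    (g i).elim (f i) (fun s => Function.update (Function.update (f i) s (f i s - 1))
      (insert x s) 1) with hf'
  have hnone : ∀ i, g i = none → f' i = f i := by
    intro i hgi
    simp only [hf', hgi]
    rfl
  have hsome : ∀ i s, g i = some s →
      f' i = Function.update (Function.update (f i) s (f i s - 1)) (insert x s) 1 := by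
    intro i s hgi
    simp only [hf', hgi]
    rfl
  have hval : ∀ i s, g i = some s →
      f' i (insert x s) = 1 ∧ f' i s = f i s - 1 ∧
      (∀ u, u ≠ insert x s → u ≠ s → f' i u = f i u) := by
    intro i s hgi
    obtain ⟨hfs, hsc, hsupp_s, hxs⟩ := hfacts i s hgi
    have hins_ne : insert x s ≠ s := Finset.insert_ne_self.mpr hxs
    rw [hsome i s hgi]
    refine ⟨Function.update_self _ _ _, ?_, ?_⟩
    · rw [Function.update_of_ne hins_ne.symm, Function.update_self]
    · intro u hu1 hu2
      rw [Function.update_of_ne hu1, Function.update_of_ne hu2]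
  have hold : ∀ i s, g i = some s → ∀ u, u ≠ insert x s → f' i u ≠ 0 → f i u ≠ 0 := by
    intro i s hgi u hu1 hu2
    by_cases hus : u = s
    · rw [hus] at hu2 ⊢
      have h1 := (hval i s hgi).2.1
      omega
    · rw [(hval i s hgi).2.2 u hu1 hus] at hu2
      exact hu2
  -- the weighted-sum exchange identity
  have hkeyw : ∀ i s, g i = some s → ∀ w : Finset (Fin n) → ℕ,
      (∑ u, f' i u * w u) + w s = w (insert x s) + ∑ u, f i u * w u := by
    intro i s hgi w
    obtain ⟨hfs, hsc, hsupp_s, hxs⟩ := hfacts i s hgi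
    have hins_ne : insert x s ≠ s := Finset.insert_ne_self.mpr hxs
    have hfins : f i (insert x s) = 0 := by
      by_contra hc
      have := hf.supp i (insert x s) hc x (Finset.mem_insert_self x s)
      omega
    have hsmem : s ∈ Finset.univ.erase (insert x s) :=
      Finset.mem_erase.mpr ⟨hins_ne.symm, Finset.mem_univ s⟩
    have h1 : ∑ u, f' i u * w u
        = 1 * w (insert x s) + ∑ u ∈ Finset.univ.erase (insert x s),
            Function.update (f i) s (f i s - 1) u * w u := by
      rw [hsome i s hgi]
      exact sum_update_mul _ _ _ w Finset.univ (Finset.mem_univ _)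
    have h2 : ∑ u ∈ Finset.univ.erase (insert x s),
          Function.update (f i) s (f i s - 1) u * w u
        = (f i s - 1) * w s + ∑ u ∈ (Finset.univ.erase (insert x s)).erase s,
            f i u * w u := sum_update_mul (f i) s (f i s - 1) w _ hsmem
    have h3 : f i (insert x s) * w (insert x s)
          + ∑ u ∈ Finset.univ.erase (insert x s), f i u * w u
        = ∑ u, f i u * w u :=
      Finset.add_sum_erase Finset.univ (fun u => f i u * w u) (Finset.mem_univ _)
    have h4 : f i s * w s + ∑ u ∈ (Finset.univ.erase (insert x s)).erase s, f i u * w u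
        = ∑ u ∈ Finset.univ.erase (insert x s), f i u * w u :=
      Finset.add_sum_erase _ (fun u => f i u * w u) hsmem
    have h5 : (f i s - 1) * w s + w s = f i s * w s := by
      have : f i s - 1 + 1 = f i s := by omega
      rw [← Nat.succ_mul, Nat.succ_eq_add_one, this]
    rw [hfins, Nat.zero_mul, Nat.zero_add] at h3
    rw [h1, h2]
    rw [← h3, ← h4]
    omega
  -- not-promoted classes are not tight
  have hnotight : ∀ i, g i = none → ¬ (n - m ≤ ρ i) := by
    intro i hgi ht
    obtain ⟨s, hs⟩ := hG2 i ht
    rw [hgi] at hs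
    exact absurd hs (by simp)
  refine ⟨f', ?_, ?_, ?_, ?_, ?_, ?_, ?_⟩
  · -- supp
    intro i u hu y hy
    cases hgi : g i with
    | none =>
      rw [hnone i hgi] at hu
      exact Nat.lt_succ_of_lt (hf.supp i u hu y hy)
    | some s =>
      obtain ⟨hfs, hsc, hsupp_s, hxs⟩ := hfacts i s hgi
      by_cases hu_ins : u = insert x s
      · subst hu_ins
        rcases Finset.mem_insert.mp hy with rfl | hy'
        · omega
        · exact Nat.lt_succ_of_lt (hsupp_s y hy')
      · exact Nat.lt_succ_of_lt (hf.supp i u (hold i s hgi u hu_ins hu) y hy)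
  · -- cardle
    intro i u hu
    cases hgi : g i with
    | none =>
      rw [hnone i hgi] at hu
      exact hf.cardle i u hu
    | some s =>
      obtain ⟨hfs, hsc, hsupp_s, hxs⟩ := hfacts i s hgi
      by_cases hu_ins : u = insert x s
      · subst hu_ins
        rw [Finset.card_insert_of_notMem hxs]
        omega
      · exact hf.cardle i u (hold i s hgi u hu_ins hu)
  · -- mult
    intro i u hune
    cases hgi : g i with
    | none =>
      rw [hnone i hgi]
      exact hf.mult i u hune
    | some s =>
      obtain ⟨hfs, hsc, hsupp_s, hxs⟩ := hfacts i s hgi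
      by_cases hu_ins : u = insert x s
      · subst hu_ins
        rw [(hval i s hgi).1]
      · by_cases hus : u = s
        · subst hus
          rw [(hval i u hgi).2.1]
          have := hf.mult i u hune
          omega
        · rw [(hval i s hgi).2.2 u hu_ins hus]
          exact hf.mult i u hune
  · -- disj
    intro i u v hu hv huv
    cases hgi : g i with
    | none =>
      rw [hnone i hgi] at hu hv
      exact hf.disj i u v hu hv huv
    | some s =>
      obtain ⟨hfs, hsc, hsupp_s, hxs⟩ := hfacts i s hgi
      have hdisj_ins : ∀ vv, f' i vv ≠ 0 → vv ≠ insert x s → Disjoint (insert x s) vv := by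
        intro vv hvv hne
        by_cases hvs : vv = s
        · subst hvs
          have h1 := (hval i vv hgi).2.1
          have h2 : f i vv ≥ 2 := by omega
          have h3 : vv = ∅ := by
            by_contra hc
            have := hf.mult i vv hc
            omega
          rw [h3]
          exact Finset.disjoint_empty_right _
        · have hfv := hold i s hgi vv hne hvv
          have hdis : Disjoint s vv := hf.disj i s vv hfs hfv (Ne.symm hvs)
          have hxv : x ∉ vv := by
            intro hxin
            have := hf.supp i vv hfv x hxin
            omega
          exact Finset.disjoint_insert_left.mpr ⟨hxv, hdis⟩
      by_cases hu_ins : u = insert x s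
      · subst hu_ins
        exact hdisj_ins v hv (Ne.symm huv)
      · by_cases hv_ins : v = insert x s
        · subst hv_ins
          exact (hdisj_ins u hu hu_ins).symm
        · exact hf.disj i u v (hold i s hgi u hu_ins hu) (hold i s hgi v hv_ins hv) huv
  · -- total
    intro i
    cases hgi : g i with
    | none =>
      rw [hnone i hgi]
      exact hf.total i
    | some s =>
      have h1 := hkeyw i s hgi (fun _ => 1)
      simp only [Nat.mul_one] at h1
      have h2 := hf.total i
      omega
  · -- count
    intro u hsupp_u hcard_u
    by_cases hxu : x ∈ u
    · -- u contains the new element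
      have hcard_pos : 1 ≤ u.card := Finset.card_pos.mpr ⟨x, hxu⟩
      have hsx : ∀ i, f' i u = if g i = some (u.erase x) then 1 else 0 := by
        intro i
        cases hgi : g i with
        | none =>
          rw [hnone i hgi]
          have hz : f i u = 0 := by
            by_contra hc
            have := hf.supp i u hc x hxu
            omega
          rw [hz, if_neg (by simp)]
        | some s =>
          obtain ⟨hfs, hsc, hsupp_s, hxs⟩ := hfacts i s hgi
          by_cases hu_ins : u = insert x s
          · have h1 : f' i u = 1 := by rw [hu_ins]; exact (hval i s hgi).1
            have h2 : u.erase x = s := by rw [hu_ins]; exact Finset.erase_insert hxs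
            rw [h1, if_pos (by rw [h2])]
          · have hne_s : u ≠ s := fun h => hxs (h ▸ hxu)
            have h1 : f' i u = f i u := (hval i s hgi).2.2 u hu_ins hne_s
            have h2 : f i u = 0 := by
              by_contra hc
              have := hf.supp i u hc x hxu
              omega
            have h3 : ¬ ((some s : Option (Finset (Fin n))) = some (u.erase x)) := by
              intro hc
              have hse : s = u.erase x := Option.some.inj hc
              exact hu_ins (by rw [hse, Finset.insert_erase hxu])
            rw [h1, h2, if_neg h3]
      have hmem : u.erase x ∈ allTypes := by
        simp only [hallTypes, Finset.mem_filter]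
        refine ⟨Finset.mem_univ _, fun y hy => ?_, ?_⟩
        · obtain ⟨hyx, hyu⟩ := Finset.mem_erase.mp hy
          have h1 := hsupp_u y hyu
          have h2 : (y : Fin n).val ≠ m := by
            intro hc
            exact hyx (Fin.ext (hc.trans hxval.symm))
          omega
        · rw [Finset.card_erase_of_mem hxu]
          omega
      rw [Finset.sum_congr rfl (fun i _ => hsx i), ← Finset.card_filter, hG3 _ hmem]
      show (n - m - 1).choose (k - (u.erase x).card - 1) = (n - (m + 1)).choose (k - u.card)
      rw [Finset.card_erase_of_mem hxu]
      congr 1 <;> omega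
    · -- u does not contain the new element
      have hsupp_m : ∀ y ∈ u, (y : Fin n).val < m := by
        intro y hy
        have h1 := hsupp_u y hy
        have h2 : (y : Fin n).val ≠ m := by
          intro hc
          exact hxu ((Fin.ext (hc.trans hxval.symm) : y = x) ▸ hy)
        omega
      have hkey : ∀ i, f' i u + (if g i = some u then 1 else 0) = f i u := by
        intro i
        cases hgi : g i with
        | none =>
          rw [hnone i hgi, if_neg (by simp)]
          omega
        | some s =>
          obtain ⟨hfs, hsc, hsupp_s, hxs⟩ := hfacts i s hgi
          by_cases hu_ins : u = insert x s
          · exact absurd (by rw [hu_ins]; exact Finset.mem_insert_self x s : x ∈ u) hxu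
          · by_cases hus : u = s
            · subst hus
              rw [(hval i u hgi).2.1, if_pos rfl]
              omega
            · rw [(hval i s hgi).2.2 u hu_ins hus,
                if_neg (fun hc => hus (Option.some.inj hc).symm)]
              omega
      have hsum : (∑ i, f' i u) + (Finset.univ.filter (fun i => g i = some u)).card
          = ∑ i, f i u := by
        rw [Finset.card_filter, ← Finset.sum_add_distrib]
        exact Finset.sum_congr rfl fun i _ => hkey i
      have hcount := hf.count u hsupp_m hcard_u
      by_cases huk : u.card < k
      · have hmem : u ∈ allTypes := by
          simp only [hallTypes, Finset.mem_filter]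
          exact ⟨Finset.mem_univ _, hsupp_m, huk⟩
        have h3 := hG3 u hmem
        have hdu : d u = (n - m - 1).choose (k - u.card - 1) := rfl
        have hpascal : (n - m).choose (k - u.card)
            = (n - m - 1).choose (k - u.card - 1) + (n - m - 1).choose (k - u.card) := by
          have e1 : n - m = (n - m - 1) + 1 := by omega
          have e2 : k - u.card = (k - u.card - 1) + 1 := by omega
          rw [e1, e2, Nat.choose_succ_succ, Nat.succ_eq_add_one, ← e2]
          congr 1 <;> congr 1 <;> omega
        have e3 : n - (m + 1) = n - m - 1 := by omega
        rw [e3]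
        omega
      · have huk' : u.card = k := by omega
        have h0 : (Finset.univ.filter (fun i => g i = some u)).card = 0 := by
          rw [Finset.card_eq_zero, Finset.filter_eq_empty_iff]
          intro i _ hc
          have := (hfacts i u hc).2.1
          omega
        have e4 : k - u.card = 0 := by omega
        rw [e4, Nat.choose_zero_right] at hcount ⊢
        omega
  · -- slack
    intro i
    cases hgi : g i with
    | none =>
      rw [hnone i hgi]
      have h1 := hρle i
      have h2 := hnotight i hgi
      have h3 : ∑ u, f i u * (k - u.card) = ρ i := rfl
      omega
    | some s =>
      obtain ⟨hfs, hsc, hsupp_s, hxs⟩ := hfacts i s hgi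
      have h1 := hkeyw i s hgi (fun u => k - u.card)
      have h2 : k - (insert x s).card = k - (s.card + 1) := by
        rw [Finset.card_insert_of_notMem hxs]
      have h3 : ∑ u, f i u * (k - u.card) = ρ i := rfl
      have h4 := hρle i
      simp only [h2] at h1
      omega


theorem BInv_final (n k t : ℕ) (a : Fin t → ℕ) (hk : 1 ≤ k)
    (f : Fin t → Finset (Fin n) → ℕ) (hf : BInv n k t a n f) :
    ∃ A : Fin t → Finset {s : Finset (Fin n) // s.card = k},
      (∀ i, (kneser n k).IsNClique (a i) (A i)) ∧
      (∀ v : {s : Finset (Fin n) // s.card = k}, ∃! i, v ∈ A i) := by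
  classical
  have hcardk : ∀ i s, f i s ≠ 0 → s.card = k := by
    intro i s hs
    have hsl := hf.slack i
    rw [Nat.sub_self] at hsl
    have := Finset.sum_eq_zero_iff.mp (Nat.le_zero.mp hsl) s (Finset.mem_univ s)
    have hck := hf.cardle i s hs
    rcases Nat.mul_eq_zero.mp this with h | h
    · exact absurd h hs
    · omega
  have hone : ∀ i s, f i s ≠ 0 → f i s = 1 := by
    intro i s hs
    have hne : s ≠ ∅ := by
      intro he
      have := hcardk i s hs
      rw [he] at this
      simp at this
      omega
    have := hf.mult i s hne
    omega
  refine ⟨fun i => Finset.univ.filter (fun v : {s : Finset (Fin n) // s.card = k} =>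
      f i v.1 ≠ 0), ?_, ?_⟩
  · intro i
    constructor
    · intro v hv w hw hvw
      simp only [Finset.coe_filter, Set.mem_setOf_eq] at hv hw
      refine (show v ≠ w ∧ Disjoint v.1 w.1 from ⟨hvw, hf.disj i v.1 w.1 hv.2 hw.2 ?_⟩)
      intro hc
      exact hvw (Subtype.ext hc)
    · -- card = a i
      have h1 : (Finset.univ.filter (fun v : {s : Finset (Fin n) // s.card = k} =>
          f i v.1 ≠ 0)).card = ∑ v : {s : Finset (Fin n) // s.card = k}, f i v.1 := by
        rw [Finset.card_filter]
        refine Finset.sum_congr rfl fun v _ => ?_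
        by_cases h : f i v.1 ≠ 0
        · rw [if_pos h, hone i v.1 h]
        · rw [if_neg h]; push_neg at h; omega
      have h2 : ∑ v : {s : Finset (Fin n) // s.card = k}, f i v.1
          = ∑ s ∈ Finset.univ.filter (fun s : Finset (Fin n) => s.card = k), f i s := by
        exact (Finset.sum_subtype (Finset.univ.filter (fun s : Finset (Fin n) => s.card = k))
          (by simp) (f i)).symm
      have h3 : ∑ s ∈ Finset.univ.filter (fun s : Finset (Fin n) => s.card = k), f i s
          = ∑ s : Finset (Fin n), f i s := by
        refine Finset.sum_subset (Finset.filter_subset _ _) ?_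
        intro s _ hs
        simp only [Finset.mem_filter, Finset.mem_univ, true_and] at hs
        by_contra hc
        exact hs (hcardk i s hc)
      rw [h1, h2, h3, hf.total i]
  · intro v
    have hv1 : ∀ y ∈ v.1, (y : Fin n).val < n := fun y _ => y.isLt
    have := hf.count v.1 hv1 (le_of_eq v.2)
    rw [v.2, Nat.sub_self, Nat.sub_self, Nat.choose_self] at this
    obtain ⟨i, hi, hiu⟩ := sum_eq_one_existsUnique (fun i => f i v.1) this
    refine ⟨i, ?_, ?_⟩
    · simp only [Finset.mem_filter, Finset.mem_univ, true_and]
      exact hi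
    · intro j hj
      simp only [Finset.mem_filter, Finset.mem_univ, true_and] at hj
      exact hiu j hj

theorem stmt_3 (n k t : ℕ) (hk : 1 ≤ k) (hkn : k ≤ n)
    (a : Fin t → ℕ) (ha1 : ∀ i, 1 ≤ a i) (hank : ∀ i, a i ≤ n / k)
    (hsum : ∑ i, a i = n.choose k) :
    ∃ A : Fin t → Finset {s : Finset (Fin n) // s.card = k},
      (∀ i, (kneser n k).IsNClique (a i) (A i)) ∧
      (∀ v : {s : Finset (Fin n) // s.card = k}, ∃! i, v ∈ A i) := by
  have hexists : ∀ m, m ≤ n → ∃ f, BInv n k t a m f := by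
    intro m
    induction m with
    | zero => exact fun _ => ⟨_, BInv_base n k t a hk hank hsum⟩
    | succ m ih =>
      intro hm1
      obtain ⟨f, hf⟩ := ih (by omega)
      exact BInv_step n k t a hk m (by omega) f hf
  obtain ⟨f, hf⟩ := hexists n le_rfl
  exact BInv_final n k t a hk f hf
end

section
/- For n > k ≥ 1, there exists a cyclic enumeration x_1, x_2, ..., x_m of all k-subsets of [n] (where m = C(n,k)) such that consecutive sets differ by exactly one element, i.e., |x_i \ x_{i+1}| = 1 for all i (indices mod m). (Existence of a Gray code on [n]^(k).) -/
open Finset List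

/-- The revolving-door Gray code listing of `k`-subsets of `{0,...,n-1}`. -/
def gray : ℕ → ℕ → List (Finset ℕ)
  | _, 0 => [∅]
  | 0, _+1 => []
  | n+1, k+1 => gray n (k+1) ++ ((gray n k).reverse.map (insert n))

/-- Adjacency: each differs from the other in exactly one element. -/
def grayAdj (a b : Finset ℕ) : Prop := (a \ b).card = 1 ∧ (b \ a).card = 1

lemma grayAdj_symm {a b : Finset ℕ} (h : grayAdj a b) : grayAdj b a := ⟨h.2, h.1⟩

lemma grayAdj_insert {n : ℕ} {a b : Finset ℕ} (ha : n ∉ a) (hb : n ∉ b)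
    (h : grayAdj a b) : grayAdj (insert n a) (insert n b) := by
  have h1 : insert n a \ insert n b = a \ b := by
    ext x
    simp only [Finset.mem_sdiff, Finset.mem_insert]
    constructor
    · rintro ⟨(rfl | hx), h2⟩
      · exact absurd (Or.inl rfl) h2
      · exact ⟨hx, fun hxb => h2 (Or.inr hxb)⟩
    · rintro ⟨hx, hxb⟩
      refine ⟨Or.inr hx, ?_⟩
      rintro (rfl | h3)
      exacts [ha hx, hxb h3]
  have h2 : insert n b \ insert n a = b \ a := by
    ext x
    simp only [Finset.mem_sdiff, Finset.mem_insert]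
    constructor
    · rintro ⟨(rfl | hx), h2⟩
      · exact absurd (Or.inl rfl) h2
      · exact ⟨hx, fun hxb => h2 (Or.inr hxb)⟩
    · rintro ⟨hx, hxb⟩
      refine ⟨Or.inr hx, ?_⟩
      rintro (rfl | h3)
      exacts [hb hx, hxb h3]
  exact ⟨h1 ▸ h.1, h2 ▸ h.2⟩

lemma gray_mem (n k : ℕ) (s : Finset ℕ) :
    s ∈ gray n k ↔ s ⊆ Finset.range n ∧ s.card = k := by
  induction n generalizing k s with
  | zero =>
    cases k with
    | zero =>
      simp only [gray, List.mem_singleton]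
      constructor
      · rintro rfl; simp
      · rintro ⟨_, hc⟩; exact (Finset.card_eq_zero.mp hc)
    | succ k =>
      simp only [gray, List.not_mem_nil, false_iff, not_and]
      intro hs hc
      have := Finset.card_le_card hs
      simp [hc] at this
  | succ n ih =>
    cases k with
    | zero =>
      simp only [gray, List.mem_singleton]
      constructor
      · rintro rfl; simp
      · rintro ⟨_, hc⟩; exact (Finset.card_eq_zero.mp hc)
    | succ k =>
      simp only [gray, List.mem_append, List.mem_map, List.mem_reverse, ih]
      constructor
      · rintro (⟨hs, hc⟩ | ⟨t, ⟨ht, htc⟩, rfl⟩)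
        · exact ⟨hs.trans (Finset.range_subset_range.mpr (Nat.le_succ n)), hc⟩
        · have hnt : n ∉ t := fun h => by simpa using ht h
          constructor
          · intro x hx
            rw [Finset.mem_range]
            rcases Finset.mem_insert.mp hx with rfl | hx
            · omega
            · have := Finset.mem_range.mp (ht hx); omega
          · rw [Finset.card_insert_of_notMem hnt, htc]
      · rintro ⟨hs, hc⟩
        by_cases hn : n ∈ s
        · right
          refine ⟨s.erase n, ⟨?_, ?_⟩, ?_⟩
          · intro x hx
            have hx1 := hs (Finset.mem_of_mem_erase hx)
            have hx2 := Finset.ne_of_mem_erase hx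
            rw [Finset.mem_range] at hx1 ⊢
            omega
          · rw [Finset.card_erase_of_mem hn, hc]; omega
          · exact Finset.insert_erase hn
        · left
          refine ⟨?_, hc⟩
          intro x hx
          have := Finset.mem_range.mp (hs hx)
          rw [Finset.mem_range]
          rcases Nat.lt_succ_iff_lt_or_eq.mp this with h | rfl
          · exact h
          · exact absurd hx hn

lemma gray_eq_nil_of_gt {n k : ℕ} (h : n < k) : gray n k = [] := by
  rw [List.eq_nil_iff_forall_not_mem]
  intro s hs
  rw [gray_mem] at hs
  have := Finset.card_le_card hs.1
  rw [hs.2, Finset.card_range] at this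
  omega

lemma gray_nodup (n k : ℕ) : (gray n k).Nodup := by
  induction n generalizing k with
  | zero => cases k <;> simp [gray]
  | succ n ih =>
    cases k with
    | zero => simp [gray]
    | succ k =>
      refine List.Nodup.append (ih (k+1)) ?_ ?_
      · refine List.Nodup.map_on ?_ (List.nodup_reverse.mpr (ih k))
        intro x hx y hy hxy
        rw [List.mem_reverse, gray_mem] at hx hy
        have hnx : n ∉ x := fun h => by simpa using hx.1 h
        have hny : n ∉ y := fun h => by simpa using hy.1 h
        have := congrArg (Finset.erase · n) hxy
        simpa [Finset.erase_insert hnx, Finset.erase_insert hny] using this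
      · intro s hs hs2
        rw [gray_mem] at hs
        have hns : n ∉ s := fun h => by simpa using hs.1 h
        rcases List.mem_map.mp hs2 with ⟨t, _, rfl⟩
        exact hns (Finset.mem_insert_self n t)

lemma gray_head_getLast (n : ℕ) : ∀ k : ℕ,
    (k ≤ n → (gray n k).head? = some (Finset.range k)) ∧
    (1 ≤ k → k ≤ n → (gray n k).getLast? = some (insert (n-1) (Finset.range (k-1)))) := by
  induction n with
  | zero =>
    intro k
    constructor
    · intro hk
      interval_cases k
      simp [gray]
    · omega
  | succ n ih =>
    intro k
    cases k with
    | zero => simp [gray]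
    | succ k =>
      have hne : ∀ j ≤ n, gray n j ≠ [] := by
        intro j hj h
        have := (ih j).1 hj
        rw [h] at this
        simp at this
      constructor
      · intro hk
        show (gray n (k+1) ++ ((gray n k).reverse.map (insert n))).head? = _
        rcases Nat.lt_or_ge k n with hlt | hge
        · -- k+1 ≤ n
          rw [List.head?_append, (ih (k+1)).1 hlt]
          rfl
        · -- k = n
          have hkn : k = n := by omega
          subst hkn
          rw [gray_eq_nil_of_gt (Nat.lt_succ_self k), List.nil_append, List.head?_map,
            List.head?_reverse]
          rcases Nat.eq_zero_or_pos k with rfl | hk0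
          · simp [gray]
          · rw [(ih k).2 hk0 le_rfl]
            simp only [Option.map_some]
            congr 1
            ext x
            simp only [Finset.mem_insert, Finset.mem_range]
            omega
      · intro _ hk
        show (gray n (k+1) ++ ((gray n k).reverse.map (insert n))).getLast? = _
        have hkn : k ≤ n := by omega
        rw [List.getLast?_append]
        have hmapne : (gray n k).reverse.map (insert n) ≠ [] := by
          simp only [ne_eq, List.map_eq_nil_iff, List.reverse_eq_nil_iff]
          exact hne k hkn
        rw [List.getLast?_map, List.getLast?_reverse, (ih k).1 hkn]
        simp

lemma gray_ne_nil {n k : ℕ} (h : k ≤ n) : gray n k ≠ [] := by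
  intro hnil
  have := (gray_head_getLast n k).1 h
  rw [hnil] at this
  simp at this

lemma gray_chain (n k : ℕ) : List.Chain' grayAdj (gray n k) := by
  show List.IsChain grayAdj (gray n k)
  induction n generalizing k with
  | zero => cases k <;> simp [gray]
  | succ n ih =>
    cases k with
    | zero => simp [gray]
    | succ k =>
      show List.IsChain grayAdj (gray n (k+1) ++ ((gray n k).reverse.map (insert n)))
      rw [List.isChain_append]
      refine ⟨ih (k+1), ?_, ?_⟩
      · -- chain on the mapped reversed part
        have hrev : List.IsChain grayAdj (gray n k).reverse := by
          rw [List.isChain_reverse]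
          exact (ih k).imp (fun _ _ h => grayAdj_symm h)
        have hmem : ∀ a ∈ (gray n k).reverse, n ∉ a := by
          intro a ha
          rw [List.mem_reverse, gray_mem] at ha
          exact fun h => by simpa using ha.1 h
        clear hrev hmem
        -- redo with explicit induction
        have : ∀ l : List (Finset ℕ), (∀ a ∈ l, n ∉ a) → List.IsChain grayAdj l →
            List.IsChain grayAdj (l.map (insert n)) := by
          intro l
          induction l with
          | nil => intro _ _; simp
          | cons a l ihl =>
            intro hmem hch
            cases l with
            | nil => simp
            | cons b l =>
              rw [List.map_cons, List.map_cons, List.isChain_cons_cons]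
              rw [List.isChain_cons_cons] at hch
              refine ⟨grayAdj_insert (hmem a (by simp)) (hmem b (by simp)) hch.1, ?_⟩
              rw [← List.map_cons]
              exact ihl (fun x hx => hmem x (List.mem_cons_of_mem a hx)) hch.2
        refine this _ ?_ ?_
        · intro a ha
          rw [List.mem_reverse, gray_mem] at ha
          exact fun h => by simpa using ha.1 h
        · rw [List.isChain_reverse]
          exact (ih k).imp (fun _ _ h => grayAdj_symm h)
      · -- junction
        intro a ha b hb
        -- if gray n (k+1) is nonempty then k+1 ≤ n
        have hk1n : k + 1 ≤ n := by
          by_contra hcon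
          rw [gray_eq_nil_of_gt (by omega)] at ha
          simp at ha
        have hkn : k ≤ n := by omega
        rw [(gray_head_getLast n (k+1)).2 (by omega) hk1n] at ha
        rw [List.head?_map, List.head?_reverse] at hb
        simp only [Option.mem_def, Option.some_inj] at ha
        subst ha
        rcases Nat.eq_zero_or_pos k with rfl | hk0
        · have : (gray n 0).getLast? = some ∅ := by simp [gray]
          rw [this] at hb
          simp only [Option.map_some, Option.mem_def, Option.some_inj] at hb
          subst hb
          constructor
          · have : insert (n-1) (Finset.range 0) \ insert n ∅ = {n-1} := by
              ext x
              simp only [Finset.mem_sdiff, Finset.mem_insert, Finset.mem_range,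
                Finset.mem_singleton, Finset.notMem_empty, or_false]
              omega
            simp only [Nat.add_sub_cancel]
            rw [this]; simp
          · have : insert n ∅ \ insert (n-1) (Finset.range 0) = {n} := by
              ext x
              simp only [Finset.mem_sdiff, Finset.mem_insert, Finset.mem_range,
                Finset.mem_singleton, Finset.notMem_empty, or_false]
              omega
            rw [this]; simp
        · rw [(gray_head_getLast n k).2 hk0 hkn] at hb
          simp only [Option.map_some, Option.mem_def, Option.some_inj] at hb
          subst hb
          constructor
          · have : insert (n-1) (Finset.range (k+1-1)) \
                insert n (insert (n-1) (Finset.range (k-1))) = {k-1} := by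
              ext x
              simp only [Finset.mem_sdiff, Finset.mem_insert, Finset.mem_range,
                Finset.mem_singleton, not_or]
              omega
            rw [this]; simp
          · have : insert n (insert (n-1) (Finset.range (k-1))) \
                insert (n-1) (Finset.range (k+1-1)) = {n} := by
              ext x
              simp only [Finset.mem_sdiff, Finset.mem_insert, Finset.mem_range,
                Finset.mem_singleton, not_or]
              omega
            rw [this]; simp

lemma gray_length (n k : ℕ) : (gray n k).length = n.choose k := by
  have h1 : (gray n k).toFinset = Finset.powersetCard k (Finset.range n) := by
    ext s
    rw [List.mem_toFinset, gray_mem, Finset.mem_powersetCard]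
  have := List.toFinset_card_of_nodup (gray_nodup n k)
  rw [h1] at this
  rw [← this, Finset.card_powersetCard, Finset.card_range]

lemma attachFin_eq_of_image {n : ℕ} {s : Finset ℕ} {u : Finset (Fin n)}
    (h : ∀ m ∈ s, m < n) (hs : s = u.image Fin.val) : s.attachFin h = u := by
  subst hs
  ext b
  rw [Finset.mem_attachFin, Finset.mem_image]
  constructor
  · rintro ⟨c, hc, hcb⟩
    rwa [← Fin.val_injective hcb]
  · intro hb
    exact ⟨b, hb, rfl⟩

lemma image_val_attachFin {n : ℕ} {s : Finset ℕ} (h : ∀ m ∈ s, m < n) :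
    (s.attachFin h).image Fin.val = s := by
  ext a
  rw [Finset.mem_image]
  constructor
  · rintro ⟨b, hb, rfl⟩
    exact (Finset.mem_attachFin h).mp hb
  · intro ha
    exact ⟨⟨a, h a ha⟩, (Finset.mem_attachFin h).mpr ha, rfl⟩

lemma attachFin_sdiff_card {n : ℕ} {s t : Finset ℕ} (h : ∀ m ∈ s, m < n)
    (h' : ∀ m ∈ t, m < n) :
    (s.attachFin h \ t.attachFin h').card = (s \ t).card := by
  have : s.attachFin h \ t.attachFin h' =
      (s \ t).attachFin (fun m hm => h m (Finset.mem_sdiff.mp hm).1) := by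
    ext b
    simp [Finset.mem_attachFin, Finset.mem_sdiff]
  rw [this, Finset.card_attachFin]

theorem stmt_4 (n k : ℕ) (hk : 1 ≤ k) (hkn : k < n) :
    ∃ x : ZMod (n.choose k) → {s : Finset (Fin n) // s.card = k},
      Function.Bijective x ∧
      ∀ i, ((x i).1 \ (x (i + 1)).1).card = 1 := by
  have hm : 0 < n.choose k := Nat.choose_pos hkn.le
  haveI : NeZero (n.choose k) := ⟨hm.ne'⟩
  have hlen : (gray n k).length = n.choose k := gray_length n k
  have hmemsub : ∀ {s : Finset ℕ}, s ∈ gray n k → ∀ a ∈ s, a < n := by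
    intro s hs a ha
    rw [gray_mem] at hs
    exact Finset.mem_range.mp (hs.1 ha)
  have hidx : ∀ i : ZMod (n.choose k), i.val < (gray n k).length := by
    intro i; rw [hlen]; exact ZMod.val_lt i
  have hcardFin : ∀ i : ZMod (n.choose k),
      (((gray n k).get ⟨i.val, hidx i⟩).attachFin
        (hmemsub ((gray n k).get_mem _))).card = k := by
    intro i
    rw [Finset.card_attachFin]
    exact ((gray_mem n k _).mp ((gray n k).get_mem _)).2
  refine ⟨fun i => ⟨((gray n k).get ⟨i.val, hidx i⟩).attachFin
      (hmemsub ((gray n k).get_mem _)), hcardFin i⟩, ?_, ?_⟩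
  · constructor
    · intro i j hij
      have h1 : (gray n k).get ⟨i.val, hidx i⟩ = (gray n k).get ⟨j.val, hidx j⟩ := by
        have h2 := congrArg (fun s => Finset.image Fin.val s.1) hij
        simp only at h2
        rwa [_root_.image_val_attachFin, _root_.image_val_attachFin] at h2
      have h3 := List.nodup_iff_injective_get.mp (gray_nodup n k) h1
      have h4 : i.val = j.val := congrArg Fin.val h3
      rw [← ZMod.natCast_zmod_val i, ← ZMod.natCast_zmod_val j, h4]
    · rintro ⟨u, hu⟩
      have hs : u.image Fin.val ∈ gray n k := by
        rw [gray_mem]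
        refine ⟨?_, ?_⟩
        · intro a ha
          rcases Finset.mem_image.mp ha with ⟨b, _, rfl⟩
          exact Finset.mem_range.mpr b.isLt
        · rw [Finset.card_image_of_injective _ Fin.val_injective, hu]
      rcases List.mem_iff_get.mp hs with ⟨idx, hidxeq⟩
      refine ⟨(idx.val : ZMod (n.choose k)), ?_⟩
      have hv : ((idx.val : ℕ) : ZMod (n.choose k)).val = idx.val :=
        ZMod.val_cast_of_lt (by rw [← hlen]; exact idx.isLt)
      apply Subtype.ext
      show Finset.attachFin _ _ = u
      apply attachFin_eq_of_image
      rw [← hidxeq]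
      congr 1
      exact Fin.ext hv
  · intro i
    show (Finset.attachFin _ _ \ Finset.attachFin _ _).card = 1
    rw [attachFin_sdiff_card]
    have hv1 : (i + 1).val = (i.val + 1) % n.choose k := by
      conv_lhs => rw [← ZMod.natCast_zmod_val i]
      rw [show ((i.val : ℕ) : ZMod (n.choose k)) + 1 = ((i.val + 1 : ℕ) : ZMod (n.choose k)) by
        push_cast; ring]
      exact ZMod.val_natCast _ _
    rcases Nat.lt_or_ge (i.val + 1) (n.choose k) with hlt | hge
    · have h2 : (i + 1).val = i.val + 1 := by rw [hv1, Nat.mod_eq_of_lt hlt]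
      have := List.isChain_iff_getElem.mp (gray_chain n k) i.val (by omega)
      have goal2 : (gray n k).get ⟨(i+1).val, hidx (i+1)⟩ =
          (gray n k).get ⟨i.val + 1, by omega⟩ := by
        congr 1
        exact Fin.ext h2
      rw [goal2]
      exact this.1
    · have hieq : i.val = n.choose k - 1 := by have := ZMod.val_lt i; omega
      have h2 : (i + 1).val = 0 := by
        rw [hv1]
        have : i.val + 1 = n.choose k := by have := ZMod.val_lt i; omega
        rw [this, Nat.mod_self]
      have hhead : (gray n k).get ⟨(i+1).val, hidx (i+1)⟩ = Finset.range k := by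
        have hh := (gray_head_getLast n k).1 hkn.le
        rw [List.head?_eq_getElem?, List.getElem?_eq_getElem (by omega), Option.some_inj] at hh
        rw [← hh]
        congr 1
        exact Fin.ext h2
      have hlast : (gray n k).get ⟨i.val, hidx i⟩ =
          insert (n-1) (Finset.range (k-1)) := by
        have hh := (gray_head_getLast n k).2 hk hkn.le
        rw [List.getLast?_eq_getElem?, List.getElem?_eq_getElem (by
          have := gray_ne_nil hkn.le (n := n) (k := k)
          have : 0 < (gray n k).length := List.length_pos_iff.mpr this
          omega), Option.some_inj] at hh
        rw [← hh]
        congr 1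
        refine Fin.ext ?_
        simp only [hieq, hlen]
      rw [hhead, hlast]
      have : insert (n-1) (Finset.range (k-1)) \ Finset.range k = {n-1} := by
        ext x
        simp only [Finset.mem_sdiff, Finset.mem_insert, Finset.mem_range,
          Finset.mem_singleton]
        omega
      rw [this]
      simp
end
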